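/- Define σ(T) = (3√(2π)/4)·√(α(T))·tan(√(α(T))) for T ∈ (4/3, √2) ∪ (√2, ∞), where α(T) = 9π²/4 − 4π²/T², and σ(T) = −(3√(2π)/4)·√(−α(T))·tanh(√(−α(T))) for T ∈ (0, 4/3), with σ(4/3) = 0. Then σ has exactly two zeros on (0,√2) ∪ (√2,∞), namely T = 4/3 and T = 4√5/5. -/

import Mathlib

/-!
Write `α(T) = 9π²/4 - 4π²/T²`, which is strictly increasing on `T > 0`, with `α(4/3) = 0`,
`α(√2) = π²/4`, `α(4√5/5) = π²` and `α < 9π²/4`. On `(0, 4/3)` the hyperbolic branch is negative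
and on `(4/3, √2)` we have `√α ∈ (0, π/2)`, so the trigonometric branch is positive. For `T > √2`,
`√α ∈ (π/2, 3π/2)`, where `tan` vanishes only at `π`, i.e. exactly when `α(T) = π²`.
-/

open Real Set

theorem Real.tanh_pos_of_pos {x : ℝ} (hx : 0 < x) : 0 < tanh x := by
  rw [tanh_eq_sinh_div_cosh]
  exact div_pos (sinh_pos_iff.2 hx) (cosh_pos x)

theorem Real.tan_eq_zero_iff_eq_pi {y : ℝ} (h₁ : π / 2 < y) (h₂ : y < 3 * π / 2) :
    tan y = 0 ↔ y = π := by
  have hπ := pi_pos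
  rw [← tan_sub_pi, ← tan_zero,
    injOn_tan.eq_iff ⟨by linarith, by linarith⟩ ⟨by linarith, by linarith⟩, sub_eq_zero]

noncomputable def alpha (T : ℝ) : ℝ := 9 * π ^ 2 / 4 - 4 * π ^ 2 / T ^ 2

noncomputable def sigmaHyperbolic (T : ℝ) : ℝ :=
  -(3 * √(2 * π) / 4) * √(-alpha T) * tanh √(-alpha T)

noncomputable def sigmaTrig (T : ℝ) : ℝ :=
  (3 * √(2 * π) / 4) * √(alpha T) * tan √(alpha T)

theorem alpha_strictMonoOn : StrictMonoOn alpha (Ioi 0) := by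
  intro a ha b _ hab
  have : 4 * π ^ 2 / b ^ 2 < 4 * π ^ 2 / a ^ 2 :=
    div_lt_div_of_pos_left (by positivity) (pow_pos ha 2) (pow_lt_pow_left₀ hab ha.le two_ne_zero)
  unfold alpha
  linarith

theorem alpha_lt {T : ℝ} (hT : T ≠ 0) : alpha T < 9 * π ^ 2 / 4 := by
  have : 0 < 4 * π ^ 2 / T ^ 2 := by positivity
  unfold alpha
  linarith

theorem alpha_four_thirds : alpha (4 / 3) = 0 := by
  unfold alpha
  ring

theorem alpha_sqrt_two : alpha √2 = π ^ 2 / 4 := by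
  rw [alpha, sq_sqrt zero_le_two]
  ring

theorem alpha_four_sqrt_five_div_five : alpha (4 * √5 / 5) = π ^ 2 := by
  rw [alpha, div_pow, mul_pow, sq_sqrt (by norm_num)]
  ring

theorem four_thirds_lt_sqrt_two : (4 / 3 : ℝ) < √2 :=
  (lt_sqrt (by norm_num)).2 (by norm_num)

theorem sqrt_two_lt_four_sqrt_five_div_five : √2 < 4 * √5 / 5 := by
  rw [sqrt_lt' (by positivity), div_pow, mul_pow, sq_sqrt (by norm_num)]
  norm_num

theorem sigmaHyperbolic_neg {T : ℝ} (hT₀ : 0 < T) (hT : T < 4 / 3) : sigmaHyperbolic T < 0 := by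
  have hα : alpha T < 0 := alpha_four_thirds ▸ alpha_strictMonoOn hT₀ (by norm_num) hT
  have hx : 0 < √(-alpha T) := sqrt_pos.2 (neg_pos.2 hα)
  have hprod : 0 < 3 * √(2 * π) / 4 * √(-alpha T) * tanh √(-alpha T) :=
    mul_pos (mul_pos (by positivity) hx) (tanh_pos_of_pos hx)
  rw [sigmaHyperbolic, neg_mul, neg_mul]
  exact neg_neg_of_pos hprod

theorem sigmaTrig_pos {T : ℝ} (hT₁ : 4 / 3 < T) (hT₂ : T < √2) : 0 < sigmaTrig T := by
  have hT₀ : (0 : ℝ) < 4 / 3 := by norm_num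
  have hα₀ : 0 < alpha T := alpha_four_thirds ▸ alpha_strictMonoOn hT₀ (hT₀.trans hT₁) hT₁
  have hα₁ : alpha T < (π / 2) ^ 2 := by
    rw [div_pow, show (2 : ℝ) ^ 2 = 4 by norm_num, ← alpha_sqrt_two]
    exact alpha_strictMonoOn (hT₀.trans hT₁) (hT₀.trans (hT₁.trans hT₂)) hT₂
  have hx : 0 < √(alpha T) := sqrt_pos.2 hα₀
  have htan : 0 < tan √(alpha T) :=
    tan_pos_of_pos_of_lt_pi_div_two hx ((sqrt_lt' (by positivity)).2 hα₁)
  unfold sigmaTrig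
  positivity

theorem sigmaTrig_eq_zero_iff {T : ℝ} (hT : √2 < T) : sigmaTrig T = 0 ↔ T = 4 * √5 / 5 := by
  have hs : (0 : ℝ) < √2 := sqrt_pos.2 two_pos
  have hT₀ : 0 < T := hs.trans hT
  have hα₁ : π ^ 2 / 4 < alpha T := alpha_sqrt_two ▸ alpha_strictMonoOn hs hT₀ hT
  have hα₂ : alpha T < (3 * π / 2) ^ 2 := by
    rw [div_pow, mul_pow]
    linarith [alpha_lt hT₀.ne']
  have hx₁ : π / 2 < √(alpha T) := by
    rw [lt_sqrt (by positivity), div_pow]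
    linarith
  have hx₂ : √(alpha T) < 3 * π / 2 := (sqrt_lt' (by positivity)).2 hα₂
  have hc : 3 * √(2 * π) / 4 * √(alpha T) ≠ 0 := by
    have : 0 < √(alpha T) := (div_pos pi_pos two_pos).trans hx₁
    positivity
  rw [sigmaTrig, mul_eq_zero, or_iff_right hc, tan_eq_zero_iff_eq_pi hx₁ hx₂,
    sqrt_eq_iff_eq_sq (by linarith [sq_nonneg π]) pi_pos.le, ← alpha_four_sqrt_five_div_five]
  exact alpha_strictMonoOn.injOn.eq_iff hT₀ (hs.trans sqrt_two_lt_four_sqrt_five_div_five)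

theorem stmt_16 (σ : ℝ → ℝ)
    (hσ1 : ∀ T ∈ Set.Ioo (0:ℝ) (4/3),
      σ T = -(3 * Real.sqrt (2 * π) / 4) *
        Real.sqrt (-(9 * π^2 / 4 - 4 * π^2 / T^2)) *
        Real.tanh (Real.sqrt (-(9 * π^2 / 4 - 4 * π^2 / T^2))))
    (hσ2 : σ (4/3) = 0)
    (hσ3 : ∀ T : ℝ, 4/3 < T → T ≠ Real.sqrt 2 →
      σ T = (3 * Real.sqrt (2 * π) / 4) *
        Real.sqrt (9 * π^2 / 4 - 4 * π^2 / T^2) *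
        Real.tan (Real.sqrt (9 * π^2 / 4 - 4 * π^2 / T^2))) :
    ∀ T ∈ Set.Ioo (0:ℝ) (Real.sqrt 2) ∪ Set.Ioi (Real.sqrt 2),
      (σ T = 0 ↔ T = 4/3 ∨ T = 4 * Real.sqrt 5 / 5) := by
  have h₁ := four_thirds_lt_sqrt_two
  have h₂ := sqrt_two_lt_four_sqrt_five_div_five
  intro T hT
  rcases lt_trichotomy T (4 / 3) with hlt | rfl | hgt
  · have hT₀ : 0 < T := by
      rcases hT with ⟨hT₀, -⟩ | hT
      exacts [hT₀, (sqrt_pos.2 two_pos).trans hT]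
    have hσT : σ T = sigmaHyperbolic T := hσ1 T ⟨hT₀, hlt⟩
    rw [hσT]
    exact iff_of_false (sigmaHyperbolic_neg hT₀ hlt).ne (by rintro (rfl | rfl) <;> linarith)
  · simp [hσ2]
  · rcases hT with ⟨-, hTs⟩ | hTs
    · have hσT : σ T = sigmaTrig T := hσ3 T hgt hTs.ne
      rw [hσT]
      exact iff_of_false (sigmaTrig_pos hgt hTs).ne' (by rintro (rfl | rfl) <;> linarith)
    · have hσT : σ T = sigmaTrig T := hσ3 T hgt (ne_of_gt hTs)
      rw [hσT, sigmaTrig_eq_zero_iff hTs]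
      exact (or_iff_right hgt.ne').symm
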